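/- For all integers M ≥ 2 and 1 ≤ r ≤ M−1, the following identity holds in the polynomial ring ℚ[X]: (X − (M − r)) · ∑_{a ≥ 1, b ≥ 1, a+b ≤ M} s(M, a+b) · (M−r)^{a−1} · X^b = X·(X−1)⋯(X−M+1). Equivalently, for every rational number x ∉ {M−r}, ∑_{a,b ≥ 1, a+b ≤ M} s(M,a+b)(M−r)^{a−1} x^b equals x(x−1)⋯(x−M+1)/(x − M + r). -/
import Mathlib


open Finset Polynomial

/-- The signed Stirling numbers of the first kind: `s n k` is the coefficient of `X^k`
in the descending factorial `X(X-1)⋯(X-n+1)`. -/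
noncomputable def stirlingFirst (n k : ℕ) : ℤ := (descPochhammer ℤ n).coeff k

/-- Index set of pairs `(a, b)` of natural numbers with `a, b ≥ 1` and `a + b ≤ M`. -/
def pairIdx (M : ℕ) : Finset (ℕ × ℕ) :=
  (Finset.Icc 1 M ×ˢ Finset.Icc 1 M).filter fun p => p.1 + p.2 ≤ M

lemma telescope (c : ℚ) (k : ℕ) :
    (Polynomial.X - Polynomial.C c) *
        ∑ b ∈ Finset.Icc 1 k, Polynomial.C (c ^ (k - b)) * Polynomial.X ^ b
      = Polynomial.X ^ (k + 1) - Polynomial.C (c ^ k) * Polynomial.X := by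
  induction k with
  | zero => simp
  | succ k ih =>
    have h1 : Finset.Icc 1 (k + 1) = insert (k + 1) (Finset.Icc 1 k) := by
      ext x; simp [Finset.mem_Icc]; omega
    rw [h1, Finset.sum_insert (by simp)]
    have h2 : ∑ b ∈ Finset.Icc 1 k, Polynomial.C (c ^ (k + 1 - b)) * Polynomial.X ^ b
        = Polynomial.C c * ∑ b ∈ Finset.Icc 1 k, Polynomial.C (c ^ (k - b)) * Polynomial.X ^ b := by
      rw [Finset.mul_sum]
      refine Finset.sum_congr rfl fun b hb => ?_
      simp only [Finset.mem_Icc] at hb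
      have hbe : k + 1 - b = (k - b) + 1 := by omega
      rw [hbe, pow_succ', Polynomial.C_mul, mul_assoc]
    rw [h2, mul_add, Nat.sub_self, pow_zero, map_one, one_mul,
      mul_left_comm (Polynomial.X - Polynomial.C c) (Polynomial.C c), ih, pow_succ c, map_mul]
    ring

lemma sum_range_split {α : Type*} [AddCommMonoid α] (M : ℕ) (hM : 2 ≤ M) (f : ℕ → α) :
    ∑ k ∈ Finset.range (M + 1), f k = f 0 + f 1 + ∑ k ∈ Finset.Icc 2 M, f k := by
  have h : Finset.range (M + 1) = insert 0 (insert 1 (Finset.Icc 2 M)) := by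
    ext x; simp [Finset.mem_Icc, Nat.lt_succ_iff]; omega
  rw [h, Finset.sum_insert (by simp), Finset.sum_insert (by simp), add_assoc]

/-- The evaluation of the left-hand side of equation (pt-3) in the proof of Theorem 2 of
the paper, as an identity in `ℚ[X]`:
`(X - (M-r)) · ∑_{a,b ≥ 1, a+b ≤ M} s(M, a+b) (M-r)^{a-1} X^b = X(X-1)⋯(X-M+1)`
for `1 ≤ r ≤ M-1`. -/
theorem stirling_pair_sum_poly (M r : ℕ) (hM : 2 ≤ M) (hr1 : 1 ≤ r) (hr2 : r ≤ M - 1) :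
    (Polynomial.X - Polynomial.C ((M - r : ℕ) : ℚ)) *
        ∑ p ∈ pairIdx M,
          Polynomial.C ((stirlingFirst M (p.1 + p.2) : ℚ) * ((M - r : ℕ) : ℚ) ^ (p.1 - 1))
            * Polynomial.X ^ p.2
      = descPochhammer ℚ M := by
  set c : ℚ := ((M - r : ℕ) : ℚ) with hc
  set P : Polynomial ℚ := descPochhammer ℚ M with hP
  have hcoeff : ∀ n, (stirlingFirst M n : ℚ) = P.coeff n := by
    intro n
    rw [hP, ← descPochhammer_map (Int.castRingHom ℚ) M, Polynomial.coeff_map]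
    rfl
  -- reindex the sum over pairs as a double sum
  have hreindex :
      ∑ p ∈ pairIdx M,
          Polynomial.C ((stirlingFirst M (p.1 + p.2) : ℚ) * c ^ (p.1 - 1)) * Polynomial.X ^ p.2
        = ∑ k ∈ Finset.Icc 2 M, Polynomial.C (P.coeff k) *
            ∑ b ∈ Finset.Icc 1 (k - 1), Polynomial.C (c ^ (k - 1 - b)) * Polynomial.X ^ b := by
    have h1 : ∀ k ∈ Finset.Icc 2 M, Polynomial.C (P.coeff k) *
            ∑ b ∈ Finset.Icc 1 (k - 1), Polynomial.C (c ^ (k - 1 - b)) * Polynomial.X ^ b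
          = ∑ b ∈ Finset.Icc 1 (k - 1),
              Polynomial.C (P.coeff k * c ^ (k - 1 - b)) * Polynomial.X ^ b := by
      intro k _
      rw [Finset.mul_sum]
      refine Finset.sum_congr rfl fun b _ => ?_
      rw [Polynomial.C_mul, mul_assoc]
    rw [Finset.sum_congr rfl h1, Finset.sum_sigma']
    refine Finset.sum_nbij' (fun p => ⟨p.1 + p.2, p.2⟩) (fun q => (q.1 - q.2, q.2)) ?_ ?_ ?_ ?_ ?_
    · intro p hp
      simp only [pairIdx, Finset.mem_filter, Finset.mem_product, Finset.mem_Icc] at hp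
      simp only [Finset.mem_sigma, Finset.mem_Icc]
      omega
    · intro q hq
      simp only [Finset.mem_sigma, Finset.mem_Icc] at hq
      simp only [pairIdx, Finset.mem_filter, Finset.mem_product, Finset.mem_Icc]
      omega
    · intro p hp
      ext <;> simp <;> omega
    · intro q hq
      simp only [Finset.mem_sigma, Finset.mem_Icc] at hq
      obtain ⟨k, b⟩ := q
      simp only [Sigma.mk.inj_iff, heq_eq_eq]
      constructor <;> simp_all <;> omega
    · intro p hp
      simp only [pairIdx, Finset.mem_filter, Finset.mem_product, Finset.mem_Icc] at hp
      have h2 : p.1 + p.2 - 1 - p.2 = p.1 - 1 := by omega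
      rw [hcoeff, h2]
  -- telescoping
  have htel : ∀ k ∈ Finset.Icc 2 M,
      (Polynomial.X - Polynomial.C c) * (Polynomial.C (P.coeff k) *
          ∑ b ∈ Finset.Icc 1 (k - 1), Polynomial.C (c ^ (k - 1 - b)) * Polynomial.X ^ b)
        = Polynomial.C (P.coeff k) * (Polynomial.X ^ k - Polynomial.C (c ^ (k - 1)) * Polynomial.X) := by
    intro k hk
    simp only [Finset.mem_Icc] at hk
    rw [mul_left_comm]
    congr 1
    have hk1 : k = (k - 1) + 1 := by omega
    calc (Polynomial.X - Polynomial.C c) *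
          ∑ b ∈ Finset.Icc 1 (k - 1), Polynomial.C (c ^ (k - 1 - b)) * Polynomial.X ^ b
        = Polynomial.X ^ ((k - 1) + 1) - Polynomial.C (c ^ (k - 1)) * Polynomial.X :=
          telescope c (k - 1)
      _ = Polynomial.X ^ k - Polynomial.C (c ^ (k - 1)) * Polynomial.X := by rw [← hk1]
  have hcM : (M - r : ℕ) < M := by omega
  have hcne : c ≠ 0 := by
    simp only [hc, ne_eq, Nat.cast_eq_zero]
    omega
  have heval : P.eval c = 0 := by
    rw [hP, hc, descPochhammer_eval_eq_descFactorial ℚ (M - r) M,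
      Nat.descFactorial_eq_zero_iff_lt.mpr hcM, Nat.cast_zero]
  have hdeg : P.natDegree = M := descPochhammer_natDegree (R := ℚ) M
  have hP0 : P.coeff 0 = 0 := by
    rw [Polynomial.coeff_zero_eq_eval_zero]
    exact descPochhammer_ne_zero_eval_zero ℚ (by omega : M ≠ 0)
  -- key sum identity from the evaluation at c
  have hsum : ∑ k ∈ Finset.Icc 2 M, P.coeff k * c ^ (k - 1) = - P.coeff 1 := by
    have he : P.eval c = ∑ k ∈ Finset.range (M + 1), P.coeff k * c ^ k :=
      Polynomial.eval_eq_sum_range' (by rw [hdeg]; omega) c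
    rw [sum_range_split M hM] at he
    have hstep : ∑ k ∈ Finset.Icc 2 M, P.coeff k * c ^ k
        = c * ∑ k ∈ Finset.Icc 2 M, P.coeff k * c ^ (k - 1) := by
      rw [Finset.mul_sum]
      refine Finset.sum_congr rfl fun k hk => ?_
      simp only [Finset.mem_Icc] at hk
      have hck : c ^ k = c ^ (k - 1) * c := by
        rw [← pow_succ]
        congr 1
        omega
      rw [hck]; ring
    rw [hstep, heval, hP0] at he
    simp only [pow_zero, pow_one, zero_mul, zero_add] at he
    have hmul : c * (P.coeff 1 + ∑ k ∈ Finset.Icc 2 M, P.coeff k * c ^ (k - 1)) = 0 := by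
      linear_combination -he
    have := (mul_eq_zero.mp hmul).resolve_left hcne
    linarith
  have hPsum : P = ∑ k ∈ Finset.range (M + 1), Polynomial.C (P.coeff k) * Polynomial.X ^ k := by
    conv_lhs => rw [P.as_sum_range' (M + 1) (by rw [hdeg]; omega)]
    exact Finset.sum_congr rfl fun k _ => (Polynomial.C_mul_X_pow_eq_monomial).symm
  have hsplit : ∑ k ∈ Finset.Icc 2 M, Polynomial.C (P.coeff k) *
        (Polynomial.X ^ k - Polynomial.C (c ^ (k - 1)) * Polynomial.X)
      = (∑ k ∈ Finset.Icc 2 M, Polynomial.C (P.coeff k) * Polynomial.X ^ k)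
        - Polynomial.C (∑ k ∈ Finset.Icc 2 M, P.coeff k * c ^ (k - 1)) * Polynomial.X := by
    have h3 : ∀ k ∈ Finset.Icc 2 M, Polynomial.C (P.coeff k) *
          (Polynomial.X ^ k - Polynomial.C (c ^ (k - 1)) * Polynomial.X)
        = Polynomial.C (P.coeff k) * Polynomial.X ^ k
          - Polynomial.C (P.coeff k * c ^ (k - 1)) * Polynomial.X := by
      intro k _
      rw [Polynomial.C_mul]
      ring
    rw [Finset.sum_congr rfl h3, Finset.sum_sub_distrib, map_sum, Finset.sum_mul]
  rw [hreindex, Finset.mul_sum, Finset.sum_congr rfl htel, hsplit, hsum]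
  conv_rhs => rw [hPsum]
  rw [sum_range_split M hM (fun k => Polynomial.C (P.coeff k) * Polynomial.X ^ k)]
  simp only [pow_zero, mul_one, pow_one, hP0, map_zero, zero_mul, zero_add, map_neg, neg_mul,
    sub_neg_eq_add]
  ring
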